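/- Let f : S → E be a strictly increasing function from a set of epsilon numbers into the epsilon numbers, and let x be an ordinal with Ep(x) ⊆ S. Then the set of epsilon numbers occurring hereditarily in the Cantor normal form of x[f] equals the image f[Ep(x)]; in particular Ep(x[f]) ⊆ range(f). -/

import Mathlib

open Ordinal

/-- An ordinal is an epsilon number if it is a fixed point of `ω ^ ·`. -/
def IsEpsilon (x : Ordinal.{0}) : Prop := ω ^ x = x

theorem cnf_fst_lt {x : Ordinal.{0}} (h : ¬ ω ^ x = x) {p : Ordinal × Ordinal}
    (hp : p ∈ CNF ω x) : p.1 < x := by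
  have hx : x ≠ 0 := by
    rintro rfl
    simp [Ordinal.CNF.zero_right] at hp
  have h1 : p.1 ≤ Ordinal.log ω x := Ordinal.CNF.fst_le_log hp
  have h2 : Ordinal.log ω x < x := by
    rcases lt_or_eq_of_le (Ordinal.log_le_self ω x) with h' | h'
    · exact h'
    · exfalso
      have hle := Ordinal.opow_log_le_self ω hx
      rw [h'] at hle
      exact h (le_antisymm hle (Ordinal.right_le_opow x one_lt_omega0))
  exact lt_of_le_of_lt h1 h2

open scoped Classical in
/-- The set of epsilon numbers occurring hereditarily in the Cantor normal form of `x`. -/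
noncomputable def Ep (x : Ordinal.{0}) : Set Ordinal.{0} :=
  if h : ω ^ x = x then {x}
  else ⋃ p : {q // q ∈ CNF ω x}, Ep p.1.1
termination_by x
decreasing_by exact cnf_fst_lt h p.2

open scoped Classical in
/-- Simultaneous substitution of the epsilon numbers occurring hereditarily in the
Cantor normal form of `x` by their values under `f`. -/
noncomputable def subst (f : Ordinal.{0} → Ordinal.{0}) (x : Ordinal.{0}) : Ordinal.{0} :=
  if h : ω ^ x = x then f x
  else (((CNF ω x).attach).map (fun p => ω ^ subst f p.1.1 * p.1.2)).sum
termination_by x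
decreasing_by exact cnf_fst_lt h p.2

/-! Since `f` is strictly increasing and takes values that are epsilon numbers, `subst f` is
strictly increasing on `{x | Ep x ⊆ S}`: normal forms are compared lexicographically, and below an
epsilon number `e` everything is sent below `ω ^ f e = f e`. So substituting into a Cantor normal
form yields again a Cantor normal form, `CNF ω (subst f x)` is `CNF ω x` with `subst f` applied to
the exponents, and `Ep (subst f x) = f '' Ep x` follows by induction along the exponents. -/

theorem List.biUnion_map {α β γ : Type*} (l : List α) (g : α → β) (s : β → Set γ) :
    ⋃ b ∈ l.map g, s b = ⋃ a ∈ l, s (g a) := by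
  ext
  simp

namespace Ordinal

theorem list_sum_lt_omega0_opow {l : List Ordinal} {T : Ordinal} (h : ∀ a ∈ l, a < ω ^ T) :
    l.sum < ω ^ T := by
  induction l with
  | nil => exact opow_pos T omega0_pos
  | cons a l ih =>
    exact isPrincipal_add_omega0_opow T (h a List.mem_cons_self)
      (ih fun b hb => h b (List.mem_cons_of_mem a hb))

theorem mul_add_lt_mul_add {d q q' r r' : Ordinal} (hr : r < d) (hq : q < q') :
    d * q + r < d * q' + r' :=
  calc d * q + r < d * q + d := add_lt_add_right hr _
    _ = d * Order.succ q := (mul_succ d q).symm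
    _ ≤ d * q' := mul_le_mul_right (Order.succ_le_of_lt hq) d
    _ ≤ d * q' + r' := le_self_add

theorem head_mem_CNF {x : Ordinal} (hx : x ≠ 0) :
    (log ω x, x / ω ^ log ω x) ∈ CNF ω x := by
  rw [CNF.ne_zero hx]
  exact List.mem_cons_self

theorem fst_lt_of_mem_CNF_of_lt_opow {x β : Ordinal} {p : Ordinal × Ordinal}
    (hx : x < ω ^ β) (hp : p ∈ CNF ω x) : p.1 < β := by
  have hx0 : x ≠ 0 := by
    rintro rfl
    simp at hp
  exact (CNF.fst_le_log hp).trans_lt ((lt_opow_iff_log_lt one_lt_omega0 hx0).1 hx)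

end Ordinal

theorem CNF_of_isEpsilon {x : Ordinal} (h : IsEpsilon x) : CNF ω x = [(x, 1)] := by
  have := CNF.opow_mul_add one_lt_omega0 one_ne_zero one_lt_omega0 (opow_pos x omega0_pos)
  rwa [mul_one, add_zero, show ω ^ x = x from h, CNF.zero_right] at this

theorem Ep_of_isEpsilon {x : Ordinal} (h : IsEpsilon x) : Ep x = {x} := by
  rw [Ep, dif_pos (show ω ^ x = x from h)]

theorem mem_Ep_self {x : Ordinal} (h : IsEpsilon x) : x ∈ Ep x :=
  Ep_of_isEpsilon h ▸ rfl

theorem Ep_eq_biUnion_CNF (x : Ordinal) : Ep x = ⋃ p ∈ CNF ω x, Ep p.1 := by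
  by_cases h : IsEpsilon x
  · simp [CNF_of_isEpsilon h, Ep_of_isEpsilon h]
  · rw [Ep, dif_neg (show ¬ω ^ x = x from h)]
    ext
    simp

theorem Ep_subset_of_mem_CNF {x : Ordinal} {p : Ordinal × Ordinal} (hp : p ∈ CNF ω x) :
    Ep p.1 ⊆ Ep x := by
  rw [Ep_eq_biUnion_CNF x]
  exact Set.subset_iUnion₂ (s := fun p (_ : p ∈ CNF ω x) => Ep p.1) p hp

theorem Ep_log_subset {x : Ordinal} (hx : x ≠ 0) : Ep (log ω x) ⊆ Ep x :=
  Ep_subset_of_mem_CNF (head_mem_CNF hx)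

theorem Ep_mod_opow_subset {x β : Ordinal} (h : log ω x ≤ β) : Ep (x % ω ^ β) ⊆ Ep x := by
  rcases h.lt_or_eq with h | rfl
  · rw [mod_eq_of_lt ((lt_opow_iff_log_lt' one_lt_omega0 (pos_of_gt h).ne').2 h)]
  rcases eq_or_ne x 0 with rfl | hx
  · simp
  rw [Ep_eq_biUnion_CNF (x % _)]
  exact Set.iUnion₂_subset fun p hp =>
    Ep_subset_of_mem_CNF (by rw [CNF.ne_zero hx]; exact List.mem_cons_of_mem _ hp)

section
variable {S : Set Ordinal} {f : Ordinal → Ordinal}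

theorem subst_of_isEpsilon {x : Ordinal} (h : IsEpsilon x) : subst f x = f x := by
  rw [subst, dif_pos (show ω ^ x = x from h)]

theorem subst_zero : subst f 0 = 0 := by
  rw [subst, dif_neg (by simp), CNF.zero_right]
  simp

theorem subst_eq_sum_CNF (hfE : ∀ e ∈ S, IsEpsilon (f e)) {x : Ordinal} (hx : Ep x ⊆ S) :
    subst f x = ((CNF ω x).map fun p => ω ^ subst f p.1 * p.2).sum := by
  by_cases h : IsEpsilon x
  · simp only [CNF_of_isEpsilon h, List.map_cons, List.map_nil, List.sum_cons, List.sum_nil,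
      add_zero, mul_one, subst_of_isEpsilon h]
    exact (hfE x (hx (mem_Ep_self h))).symm
  · rw [subst, dif_neg (show ¬ω ^ x = x from h)]
    exact congrArg List.sum
      (List.attach_map_val (f := fun p : Ordinal × Ordinal => ω ^ subst f p.1 * p.2))

theorem subst_eq_opow_mul_div_add_mod (hfE : ∀ e ∈ S, IsEpsilon (f e)) {x β : Ordinal}
    (hx : Ep x ⊆ S) (hβ : log ω x ≤ β) :
    subst f x = ω ^ subst f β * (x / ω ^ β) + subst f (x % ω ^ β) := by
  rcases hβ.lt_or_eq with hlt | rfl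
  · have hxβ : x < ω ^ β := (lt_opow_iff_log_lt' one_lt_omega0 (pos_of_gt hlt).ne').2 hlt
    rw [div_eq_zero_of_lt hxβ, mod_eq_of_lt hxβ, mul_zero, zero_add]
  rcases eq_or_ne x 0 with rfl | hx0
  · simp [subst_zero]
  rw [subst_eq_sum_CNF hfE hx, CNF.ne_zero hx0, List.map_cons, List.sum_cons,
    ← subst_eq_sum_CNF hfE ((Ep_mod_opow_subset le_rfl).trans hx)]

theorem subst_lt_opow (hfE : ∀ e ∈ S, IsEpsilon (f e)) {x T : Ordinal} (hx : Ep x ⊆ S)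
    (h : ∀ p ∈ CNF ω x, subst f p.1 < T) : subst f x < ω ^ T := by
  rw [subst_eq_sum_CNF hfE hx]
  refine list_sum_lt_omega0_opow fun a ha => ?_
  obtain ⟨p, hp, rfl⟩ := List.mem_map.1 ha
  exact opow_mul_lt_opow (CNF.snd_lt one_lt_omega0 hp) (h p hp)

theorem subst_lt_opow_subst_of_lt_opow (hfE : ∀ e ∈ S, IsEpsilon (f e)) {y β : Ordinal}
    (hβ : ∀ a < β, Ep a ⊆ S → subst f a < subst f β) (hy : Ep y ⊆ S) (hyβ : y < ω ^ β) :
    subst f y < ω ^ subst f β :=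
  subst_lt_opow hfE hy fun p hp =>
    hβ p.1 (fst_lt_of_mem_CNF_of_lt_opow hyβ hp) ((Ep_subset_of_mem_CNF hp).trans hy)

theorem subst_lt_of_lt_isEpsilon (hfE : ∀ e ∈ S, IsEpsilon (f e)) (hf : StrictMonoOn f S)
    {e : Ordinal} (he : e ∈ S) (a : Ordinal) : a < e → Ep a ⊆ S → subst f a < f e := by
  induction a using WellFoundedLT.induction with
  | _ a IH =>
  intro hae ha
  by_cases h : IsEpsilon a
  · rw [subst_of_isEpsilon h]
    exact hf (ha (mem_Ep_self h)) he hae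
  · have hlt : subst f a < ω ^ f e := subst_lt_opow hfE ha fun p hp =>
      IH p.1 (cnf_fst_lt h hp) ((cnf_fst_lt h hp).trans hae) ((Ep_subset_of_mem_CNF hp).trans ha)
    rwa [show ω ^ f e = f e from hfE e he] at hlt

theorem strictMonoOn_subst (hfE : ∀ e ∈ S, IsEpsilon (f e)) (hf : StrictMonoOn f S) :
    StrictMonoOn (subst f) {x | Ep x ⊆ S} := by
  suffices ∀ b, Ep b ⊆ S → ∀ a, Ep a ⊆ S → a < b → subst f a < subst f b from
    fun a ha b hb hab => this b hb a ha hab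
  intro b
  induction b using WellFoundedLT.induction with
  | _ b IH =>
  intro hb a ha hab
  by_cases hbε : IsEpsilon b
  · rw [subst_of_isEpsilon hbε]
    exact subst_lt_of_lt_isEpsilon hfE hf (hb (mem_Ep_self hbε)) a hab ha
  have hb0 : b ≠ 0 := (pos_of_gt hab).ne'
  set β := log ω b
  have hβ : ∀ y < β, Ep y ⊆ S → subst f y < subst f β := fun y hy hyS =>
    IH β (cnf_fst_lt hbε (head_mem_CNF hb0)) ((Ep_log_subset hb0).trans hb) y hyS hy
  have hlog : log ω a ≤ β := log_mono_right ω hab.le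
  have haS : Ep (a % ω ^ β) ⊆ S := (Ep_mod_opow_subset hlog).trans ha
  have hra : subst f (a % ω ^ β) < ω ^ subst f β :=
    subst_lt_opow_subst_of_lt_opow hfE hβ haS (mod_lt a (opow_ne_zero _ omega0_ne_zero))
  -- Divide `a` and `b` by `ω ^ log b`: compare the quotients, then, if they agree, the remainders.
  rw [subst_eq_opow_mul_div_add_mod hfE ha hlog, subst_eq_opow_mul_div_add_mod hfE hb le_rfl]
  rcases (div_le_left hab.le (ω ^ β)).lt_or_eq with hq | hq
  · exact mul_add_lt_mul_add hra hq
  · rw [hq]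
    refine add_lt_add_right (IH _ (mod_opow_log_lt_self ω hb0)
      ((Ep_mod_opow_subset le_rfl).trans hb) _ haS ?_) _
    rwa [← div_add_mod a (ω ^ β), ← div_add_mod b (ω ^ β), hq, add_lt_add_iff_left] at hab

theorem CNF_subst (hfE : ∀ e ∈ S, IsEpsilon (f e)) (hf : StrictMonoOn f S) (x : Ordinal) :
    Ep x ⊆ S → CNF ω (subst f x) = (CNF ω x).map (Prod.map (subst f) id) := by
  refine CNF.rec ω ?_ (fun x hx0 IH hx => ?_) x
  · simp [subst_zero]
  have hrS : Ep (x % ω ^ log ω x) ⊆ S := (Ep_mod_opow_subset le_rfl).trans hx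
  have hr : subst f (x % ω ^ log ω x) < ω ^ subst f (log ω x) :=
    subst_lt_opow_subst_of_lt_opow hfE
      (fun y hy hyS => strictMonoOn_subst hfE hf hyS ((Ep_log_subset hx0).trans hx) hy) hrS
      (mod_lt x (opow_ne_zero _ omega0_ne_zero))
  rw [subst_eq_opow_mul_div_add_mod hfE hx le_rfl,
    CNF.opow_mul_add one_lt_omega0 (div_opow_log_pos ω hx0).ne'
      (div_opow_log_lt x one_lt_omega0) hr,
    IH hrS, CNF.ne_zero hx0, List.map_cons]
  rfl

theorem Ep_subst (hfE : ∀ e ∈ S, IsEpsilon (f e)) (hf : StrictMonoOn f S) (x : Ordinal) :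
    Ep x ⊆ S → Ep (subst f x) = f '' Ep x := by
  induction x using WellFoundedLT.induction with
  | _ x IH =>
  intro hx
  by_cases h : IsEpsilon x
  · rw [subst_of_isEpsilon h, Ep_of_isEpsilon (hfE x (hx (mem_Ep_self h))), Ep_of_isEpsilon h,
      Set.image_singleton]
  calc Ep (subst f x) = ⋃ p ∈ CNF ω x, Ep (subst f p.1) := by
        rw [Ep_eq_biUnion_CNF, CNF_subst hfE hf x hx, List.biUnion_map]
        rfl
    _ = ⋃ p ∈ CNF ω x, f '' Ep p.1 := Set.iUnion₂_congr fun p hp =>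
        IH p.1 (cnf_fst_lt h hp) ((Ep_subset_of_mem_CNF hp).trans hx)
    _ = f '' Ep x := by rw [Ep_eq_biUnion_CNF x, Set.image_iUnion₂]

end

theorem stmt3_general (S : Set Ordinal.{0}) (f : Ordinal → Ordinal)
    (hfE : ∀ e ∈ S, IsEpsilon (f e))
    (hf : StrictMonoOn f S)
    (x : Ordinal) (hx : Ep x ⊆ S) :
    Ep (subst f x) = f '' (Ep x) ∧ Ep (subst f x) ⊆ Set.range f := by
  have h := Ep_subst hfE hf x hx
  exact ⟨h, h ▸ Set.image_subset_range f _⟩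

theorem stmt3 (S : Set Ordinal.{0}) (f : Ordinal → Ordinal)
    (hS : ∀ e ∈ S, IsEpsilon e) (hfE : ∀ e ∈ S, IsEpsilon (f e))
    (hf : StrictMonoOn f S)
    (x : Ordinal) (hx : Ep x ⊆ S) :
    Ep (subst f x) = f '' (Ep x) ∧ Ep (subst f x) ⊆ Set.range f :=
  stmt3_general S f hfE hf x hx
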